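/- Let ρ_k : X → [0,1] be a sequence of measurable functions on a measure space converging almost everywhere to ρ, and let p_k = ρ_k^k converge weakly-* in L^∞ to p. If additionally ρ·p = p almost everywhere (law of state), then for every n ≥ 1, ρ_k^{n+k} = ρ_k^n · p_k converges weakly-* to ρ^n·p = p. -/

import Mathlib

/-! The error `(ρₖⁿ - ρⁿ) pₖ` is bounded and tends to zero almost everywhere, so by dominated
convergence it vanishes when tested against any integrable `φ`, while `ρⁿ pₖ ⇀* ρⁿ p` because
`φ ρⁿ` is again integrable. Hence `ρₖⁿ⁺ᵏ = ρₖⁿ pₖ ⇀* ρⁿ p`, and the law of state `ρ p = p` iterates to `ρⁿ p = p`. -/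

open MeasureTheory Filter Set Topology

theorem pow_mul_eq_of_mul_eq {M : Type*} [Monoid M] {a b : M} (h : a * b = b) (n : ℕ) :
    a ^ n * b = b := by
  induction n with
  | zero => rw [pow_zero, one_mul]
  | succ n ih => rw [pow_succ, mul_assoc, h, ih]

section WeakStar

variable {X ι : Type*} [MeasurableSpace X] {μ : Measure X} {l : Filter ι}

/-- Weak-* convergence in `L^∞ = (L¹)^*`, tested against every integrable function. -/
def WeakStarTendsto (μ : Measure X) (F : ι → X → ℝ) (l : Filter ι) (f : X → ℝ) : Prop :=
  ∀ φ : X → ℝ, Integrable φ μ →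
    Tendsto (fun i => ∫ x, φ x * F i x ∂μ) l (𝓝 (∫ x, φ x * f x ∂μ))

theorem weakStarTendsto_of_ae_tendsto [l.IsCountablyGenerated] {F : ι → X → ℝ} {f : X → ℝ}
    {C : ℝ} (hFm : ∀ i, AEStronglyMeasurable (F i) μ) (hFC : ∀ i, ∀ᵐ x ∂μ, ‖F i x‖ ≤ C)
    (hF : ∀ᵐ x ∂μ, Tendsto (fun i => F i x) l (𝓝 (f x))) : WeakStarTendsto μ F l f := by
  intro φ hφ
  refine tendsto_integral_filter_of_dominated_convergence (fun x => ‖φ x‖ * C)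
    (.of_forall fun i => hφ.aestronglyMeasurable.mul (hFm i))
    (.of_forall fun i => ?_) (hφ.norm.mul_const C) ?_
  · filter_upwards [hFC i] with x hx
    rw [norm_mul]
    exact mul_le_mul_of_nonneg_left hx (norm_nonneg _)
  · filter_upwards [hF] with x hx using hx.const_mul (φ x)

theorem WeakStarTendsto.mul_left {F : ι → X → ℝ} {f : X → ℝ} (hF : WeakStarTendsto μ F l f)
    {h : X → ℝ} {C : ℝ} (hhm : AEStronglyMeasurable h μ) (hhC : ∀ᵐ x ∂μ, ‖h x‖ ≤ C) :
    WeakStarTendsto μ (fun i x => h x * F i x) l (fun x => h x * f x) := by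
  intro φ hφ
  simpa only [mul_assoc] using hF _ (hφ.mul_bdd hhm hhC)

theorem WeakStarTendsto.mul_of_ae_tendsto [l.IsCountablyGenerated] [l.NeBot]
    {F G : ι → X → ℝ} {f g : X → ℝ} {C D : ℝ}
    (hG : WeakStarTendsto μ G l g) (hGm : ∀ i, AEStronglyMeasurable (G i) μ)
    (hGD : ∀ᵐ x ∂μ, ∀ i, ‖G i x‖ ≤ D)
    (hF : ∀ᵐ x ∂μ, Tendsto (fun i => F i x) l (𝓝 (f x)))
    (hFm : ∀ i, AEStronglyMeasurable (F i) μ) (hFC : ∀ᵐ x ∂μ, ∀ i, ‖F i x‖ ≤ C) :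
    WeakStarTendsto μ (fun i x => F i x * G i x) l (fun x => f x * g x) := by
  have hfm : AEStronglyMeasurable f μ := aestronglyMeasurable_of_tendsto_ae l hFm hF
  have hfC : ∀ᵐ x ∂μ, ‖f x‖ ≤ C := by
    filter_upwards [hF, hFC] with x hx hxC
    exact le_of_tendsto hx.norm (.of_forall hxC)
  have hEm : ∀ i, AEStronglyMeasurable (fun x => (F i x - f x) * G i x) μ :=
    fun i => ((hFm i).sub hfm).mul (hGm i)
  have hEC : ∀ i, ∀ᵐ x ∂μ, ‖(F i x - f x) * G i x‖ ≤ (C + C) * D := fun i => by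
    filter_upwards [hFC, hfC, hGD] with x hxF hxf hxG
    exact norm_mul_le_of_le (norm_sub_le_of_le (hxF i) hxf) (hxG i)
  have herror : WeakStarTendsto μ (fun i x => (F i x - f x) * G i x) l 0 := by
    refine weakStarTendsto_of_ae_tendsto hEm hEC ?_
    filter_upwards [hF, hGD] with x hx hxG
    refine (tendsto_sub_nhds_zero_iff.mpr hx).zero_mul_isBoundedUnder_le ⟨D, ?_⟩
    exact eventually_map.mpr (.of_forall hxG)
  have hMm : ∀ i, AEStronglyMeasurable (fun x => f x * G i x) μ := fun i => hfm.mul (hGm i)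
  have hMC : ∀ i, ∀ᵐ x ∂μ, ‖f x * G i x‖ ≤ C * D := fun i => by
    filter_upwards [hfC, hGD] with x hxf hxG using norm_mul_le_of_le hxf (hxG i)
  intro φ hφ
  have hsplit : ∀ i, ∫ x, φ x * (F i x * G i x) ∂μ =
      ∫ x, φ x * ((F i x - f x) * G i x) ∂μ + ∫ x, φ x * (f x * G i x) ∂μ := fun i => by
    rw [← integral_add (hφ.mul_bdd (hEm i) (hEC i)) (hφ.mul_bdd (hMm i) (hMC i))]
    congr with x
    ring
  have hlim := (herror φ hφ).add (hG.mul_left hfm hfC φ hφ)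
  simp only [Pi.zero_apply, mul_zero, integral_zero, zero_add] at hlim
  exact hlim.congr fun i => (hsplit i).symm

end WeakStar

theorem weak_strong_limit_pressure_general {X : Type*} [MeasurableSpace X]
    (μ : Measure X)
    (ρk : ℕ → X → ℝ) (ρ p : X → ℝ)
    (hρkm : ∀ k, Measurable (ρk k))
    (hρkb : ∀ k x, ρk k x ∈ Icc (0:ℝ) 1)
    (hae : ∀ᵐ x ∂μ, Tendsto (fun k => ρk k x) atTop (nhds (ρ x)))
    (hweak : ∀ φ : X → ℝ, Integrable φ μ →
      Tendsto (fun k => ∫ x, φ x * ρk k x ^ k ∂μ) atTop (nhds (∫ x, φ x * p x ∂μ)))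
    (hstate : ∀ᵐ x ∂μ, ρ x * p x = p x) :
    ∀ n : ℕ, 1 ≤ n →
      (∀ᵐ x ∂μ, ρ x ^ n * p x = p x) ∧
      ∀ φ : X → ℝ, Integrable φ μ →
        Tendsto (fun k => ∫ x, φ x * ρk k x ^ (n + k) ∂μ) atTop
          (nhds (∫ x, φ x * p x ∂μ)) := by
  intro n _
  have hpow : ∀ᵐ x ∂μ, ρ x ^ n * p x = p x := hstate.mono fun x hx => pow_mul_eq_of_mul_eq hx n
  have hbound : ∀ᵐ x ∂μ, ∀ m k, ‖ρk k x ^ m‖ ≤ 1 := .of_forall fun x m k => by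
    rw [norm_pow, Real.norm_of_nonneg (hρkb k x).1]
    exact pow_le_one₀ (hρkb k x).1 (hρkb k x).2
  have hlim : WeakStarTendsto μ (fun k x => ρk k x ^ n * ρk k x ^ k) atTop
      (fun x => ρ x ^ n * p x) :=
    WeakStarTendsto.mul_of_ae_tendsto hweak
      (fun k => ((hρkm k).pow_const k).aestronglyMeasurable) (hbound.mono fun x hx k => hx k k)
      (hae.mono fun x hx => hx.pow n) (fun k => ((hρkm k).pow_const n).aestronglyMeasurable)
      (hbound.mono fun x hx => hx n)
  refine ⟨hpow, fun φ hφ => ?_⟩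
  have hpress : ∫ x, φ x * (ρ x ^ n * p x) ∂μ = ∫ x, φ x * p x ∂μ :=
    integral_congr_ae (hpow.mono fun x hx => congrArg (φ x * ·) hx)
  simpa only [← pow_add, hpress] using hlim φ hφ

theorem weak_strong_limit_pressure {X : Type*} [MeasurableSpace X]
    (μ : Measure X) [SigmaFinite μ]
    (ρk : ℕ → X → ℝ) (ρ p : X → ℝ)
    (hρkm : ∀ k, Measurable (ρk k)) (hρm : Measurable ρ) (hpm : Measurable p)
    (hρkb : ∀ k x, ρk k x ∈ Icc (0:ℝ) 1)
    (hρb : ∀ x, ρ x ∈ Icc (0:ℝ) 1) (hpb : ∀ x, p x ∈ Icc (0:ℝ) 1)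
    (hae : ∀ᵐ x ∂μ, Tendsto (fun k => ρk k x) atTop (nhds (ρ x)))
    (hweak : ∀ φ : X → ℝ, Integrable φ μ →
      Tendsto (fun k => ∫ x, φ x * ρk k x ^ k ∂μ) atTop (nhds (∫ x, φ x * p x ∂μ)))
    (hstate : ∀ᵐ x ∂μ, ρ x * p x = p x) :
    ∀ n : ℕ, 1 ≤ n →
      (∀ᵐ x ∂μ, ρ x ^ n * p x = p x) ∧
      ∀ φ : X → ℝ, Integrable φ μ →
        Tendsto (fun k => ∫ x, φ x * ρk k x ^ (n + k) ∂μ) atTop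
          (nhds (∫ x, φ x * p x ∂μ)) :=
  weak_strong_limit_pressure_general μ ρk ρ p hρkm hρkb hae hweak hstate
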